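/- Let e₁, e₂ ∈ ℝ and ε ∈ ℝ, and let H₁(ε) be the 2×2 complex matrix with diagonal entries e₁, e₂ and off-diagonal entries iε, iε. Then every eigenvalue of H₁(ε) is real if and only if |ε| ≤ |e₁ − e₂|/2. -/

import Mathlib

/-!
Completing the square at the midpoint `m = (e₁ + e₂) / 2` of the diagonal turns the characteristic
equation `(z - e₁) (z - e₂) + ε² = 0` into `(z - m)² = ((e₁ - e₂) / 2)² - ε²`, and every complex
square root of a real number `r` is real exactly when `0 ≤ r`.
-/

open Complex Matrix

theorem Matrix.mem_spectrum_fin_two_iff {K : Type*} [Field K] (a b c d z : K) :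
    z ∈ spectrum K !![a, b; c, d] ↔ (z - a) * (z - d) - b * c = 0 := by
  rw [mem_spectrum_iff_isRoot_charpoly, charpoly_fin_two, Polynomial.IsRoot.def]
  simp only [Polynomial.eval_add, Polynomial.eval_sub, Polynomial.eval_pow, Polynomial.eval_mul,
    Polynomial.eval_X, Polynomial.eval_C, trace_fin_two_of, det_fin_two_of]
  ring_nf

theorem Complex.forall_im_eq_zero_of_sq_eq_ofReal_iff (r : ℝ) :
    (∀ w : ℂ, w ^ 2 = r → w.im = 0) ↔ 0 ≤ r := by
  refine ⟨fun h => ?_, fun hr w hw => ?_⟩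
  · by_contra! hr
    have hw : (√(-r) * I : ℂ) ^ 2 = r := by
      rw [mul_pow, I_sq, ← ofReal_pow, Real.sq_sqrt (neg_nonneg.mpr hr.le)]
      push_cast
      ring
    have him := h _ hw
    simp only [mul_im, ofReal_re, I_im, ofReal_im, I_re, mul_zero, add_zero, mul_one] at him
    exact (Real.sqrt_pos.mpr (neg_pos.mpr hr)).ne' him
  · have hw' : w ^ 2 = (√r : ℂ) ^ 2 := by rw [hw, ← ofReal_pow, Real.sq_sqrt hr]
    rcases sq_eq_sq_iff_eq_or_eq_neg.mp hw' with rfl | rfl <;> simp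

theorem Matrix.fin_two_spectrum_im_eq_zero_iff (a d p : ℝ) {b c : ℂ} (hbc : b * c = p) :
    (∀ z ∈ spectrum ℂ !![(a : ℂ), b; c, (d : ℂ)], z.im = 0) ↔ 0 ≤ ((a - d) / 2) ^ 2 + p := by
  set m : ℂ := (((a + d) / 2 : ℝ) : ℂ)
  have hspec : ∀ z, z ∈ spectrum ℂ !![(a : ℂ), b; c, (d : ℂ)] ↔
      (z - m) ^ 2 = (((a - d) / 2) ^ 2 + p : ℝ) := by
    intro z
    rw [mem_spectrum_fin_two_iff, hbc, ← sub_eq_zero (a := (z - m) ^ 2)]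
    push_cast [m]
    ring_nf
  have him : ∀ z, (z - m).im = z.im := fun z => by simp [m]
  rw [← forall_im_eq_zero_of_sq_eq_ofReal_iff]
  refine ⟨fun h w hw => ?_, fun h z hz => ?_⟩
  · have hreal := h (w + m) ((hspec _).mpr (by simpa using hw))
    rwa [← him, add_sub_cancel_right] at hreal
  · rw [← him]
    exact h _ ((hspec z).mp hz)

theorem stmt_1 (e₁ e₂ ε : ℝ) :
    (∀ z ∈ spectrum ℂ (!![(e₁ : ℂ), I*ε; I*ε, (e₂ : ℂ)]), z.im = 0) ↔
      |ε| ≤ |e₁ - e₂| / 2 := by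
  have hbc : I * ε * (I * ε) = ((-ε ^ 2 : ℝ) : ℂ) := by
    push_cast
    linear_combination (ε : ℂ) ^ 2 * I_sq
  rw [fin_two_spectrum_im_eq_zero_iff e₁ e₂ _ hbc, ← sub_eq_add_neg, sub_nonneg, sq_le_sq,
    abs_div, abs_two]
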